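/- (Gradient norm bound) Let ρ★ = U★ U★^H where U★ ∈ ℂ^{D×r} satisfies ‖U★‖_F = 1, and suppose the measurement map 𝒜 satisfies the (3r, δ)-RIP. Let ŷ ∈ ℝ^K, e_k = ŷ_k − trace(A_k ρ★). If U ∈ ℂ^{D×r} satisfies min_{R' unitary} ‖U − U★R'‖_F ≤ σ_r(U★)/4, then ‖G(U)‖_F² ≤ (25/8)·(1 + 2δ)²·‖U U^H − ρ★‖_F² + (25 D²/(8 K²))·‖𝒜*(e)‖². -/

import Mathlib

/-!
Write `Z = U Uᴴ - U★ U★ᴴ`. Substituting `ŷ = 𝒜(U★ U★ᴴ) + e` gives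
`G(U) = (D/K) (𝒜*𝒜(Z) - 𝒜*(e)) U`, hence
`‖G(U)‖_F ≤ ((D/K) ‖𝒜*𝒜(Z)‖ + (D/K) ‖𝒜*(e)‖) ‖U‖_F`.
The matrix `𝒜*𝒜(Z)` is Hermitian, so its spectral norm is controlled by its quadratic form
`xᴴ 𝒜*𝒜(Z) x = ⟨𝒜 Z, 𝒜 (x xᴴ)⟩`. As `Z` and `x xᴴ` have ranks at most `2r` and `1`,
polarizing the `(3r, δ)`-RIP bounds this inner product by `(1 + δ) ‖Z‖_F ‖x‖²` times `K/D`.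
Finally `‖U‖_F ≤ ‖U★ R‖_F + σ_r(U★)/4 ≤ 5/4` because `σ_r(U★) ≤ ‖U★‖_F = 1`,
and `(a + b)² ≤ 2 (a² + b²)`.
-/

open Matrix
open scoped BigOperators ComplexOrder

/-- Frobenius norm of a complex matrix. -/
noncomputable def frobNorm {m n : ℕ} (A : Matrix (Fin m) (Fin n) ℂ) : ℝ :=
  Real.sqrt (∑ i, ∑ j, ‖A i j‖ ^ 2)

/-- Spectral norm (largest singular value) of a complex matrix, as the operator
norm of the induced map between Euclidean spaces. -/
noncomputable def specNorm {m n : ℕ} (A : Matrix (Fin m) (Fin n) ℂ) : ℝ :=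
  ‖LinearMap.toContinuousLinearMap (Matrix.toEuclideanLin A)‖

/-- The measurement map `𝒜(ρ)_k = trace (A k * ρ)` satisfies the `(s, δ)`-RIP. -/
def IsRIP {D K : ℕ} (A : Fin K → Matrix (Fin D) (Fin D) ℂ) (s : ℕ) (δ : ℝ) : Prop :=
  ∀ ρ : Matrix (Fin D) (Fin D) ℂ, ρ.rank ≤ s →
    (1 - δ) * frobNorm ρ ^ 2 ≤ ((D : ℝ) / (K : ℝ)) * ∑ k, ‖Matrix.trace (A k * ρ)‖ ^ 2 ∧
      ((D : ℝ) / (K : ℝ)) * ∑ k, ‖Matrix.trace (A k * ρ)‖ ^ 2 ≤ (1 + δ) * frobNorm ρ ^ 2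

/-- The adjoint of the measurement map: `𝒜*(e) = Σ_k e_k A_k`. -/
noncomputable def adjointMap {D K : ℕ} (A : Fin K → Matrix (Fin D) (Fin D) ℂ)
    (e : Fin K → ℝ) : Matrix (Fin D) (Fin D) ℂ :=
  ∑ k, (e k : ℂ) • A k

/-- The Wirtinger gradient `G(U) = (D/K) Σ_k (trace(A_k U Uᴴ) − ŷ_k) A_k U`. -/
noncomputable def wGrad {D K r : ℕ} (A : Fin K → Matrix (Fin D) (Fin D) ℂ)
    (yhat : Fin K → ℝ) (U : Matrix (Fin D) (Fin r) ℂ) : Matrix (Fin D) (Fin r) ℂ :=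
  ((D : ℂ) / (K : ℂ)) • ∑ k, (Matrix.trace (A k * (U * Uᴴ)) - (yhat k : ℂ)) • (A k * U)

/-- The Wirtinger Hessian quadratic form at `U` in direction `Δ`. -/
noncomputable def wHess {D K r : ℕ} (A : Fin K → Matrix (Fin D) (Fin D) ℂ)
    (yhat : Fin K → ℝ) (U Δ : Matrix (Fin D) (Fin r) ℂ) : ℝ :=
  (2 * (D : ℝ) / (K : ℝ)) * ∑ k, (‖Matrix.trace (A k * (U * Δᴴ))‖ ^ 2
      + ((Matrix.trace (A k * (U * Δᴴ))) ^ 2).re)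
    + (2 * (D : ℝ) / (K : ℝ)) *
      (Matrix.trace ((∑ k, (Matrix.trace (A k * (U * Uᴴ)) - (yhat k : ℂ)) • A k)
        * (Δ * Δᴴ))).re

/-- The function `h(δ)` from the recovery-error bound. -/
noncomputable def hfun (δ : ℝ) : ℝ :=
  (Real.sqrt 2 + Real.sqrt (82.55 - 762.54 * δ - 843.09 * δ ^ 2)) / (1.5 - 15.7 * δ)

/-- The smallest singular value `σ_r(X)`: the square root of the smallest
eigenvalue of `Xᴴ X`. -/
noncomputable def sigmaMin {D r : ℕ} (X : Matrix (Fin D) (Fin r) ℂ) : ℝ :=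
  Real.sqrt (⨅ i : Fin r, (Matrix.isHermitian_conjTranspose_mul_self X).eigenvalues i)


open scoped InnerProductSpace ComplexConjugate Matrix.Norms.L2Operator

namespace Matrix

variable {m n : ℕ}

theorem rank_add_le (X Y : Matrix (Fin m) (Fin n) ℂ) : (X + Y).rank ≤ X.rank + Y.rank := by
  unfold rank
  rw [mulVecLin_add]
  exact (Submodule.finrank_mono (LinearMap.range_add_le _ _)).trans
    (Submodule.finrank_add_le_finrank_add_finrank _ _)

theorem rank_smul_le (c : ℂ) (X : Matrix (Fin m) (Fin n) ℂ) : (c • X).rank ≤ X.rank := by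
  rcases eq_or_ne c 0 with rfl | hc
  · simp
  · exact (rank_smul_of_mem_nonZeroDivisors X (mem_nonZeroDivisors_of_ne_zero hc)).le

theorem rank_sub_le (X Y : Matrix (Fin m) (Fin n) ℂ) : (X - Y).rank ≤ X.rank + Y.rank := by
  rw [sub_eq_add_neg, ← neg_one_smul ℂ Y]
  exact (rank_add_le _ _).trans (Nat.add_le_add_left (rank_smul_le _ _) _)

end Matrix

noncomputable def frobVec {m n : ℕ} :
    Matrix (Fin m) (Fin n) ℂ ≃ₗ[ℂ] EuclideanSpace ℂ (Fin m × Fin n) where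
  toFun X := WithLp.toLp 2 fun p => X p.1 p.2
  invFun v := Matrix.of fun i j => v (i, j)
  map_add' _ _ := rfl
  map_smul' _ _ := rfl
  left_inv _ := rfl
  right_inv _ := rfl

section Norms

variable {m n : ℕ}

theorem specNorm_eq_norm (B : Matrix (Fin m) (Fin n) ℂ) : specNorm B = ‖B‖ := rfl

theorem specNorm_sub_le (B C : Matrix (Fin m) (Fin n) ℂ) :
    specNorm (B - C) ≤ specNorm B + specNorm C :=
  norm_sub_le B C

theorem specNorm_smul (c : ℂ) (B : Matrix (Fin m) (Fin n) ℂ) :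
    specNorm (c • B) = ‖c‖ * specNorm B :=
  norm_smul c B

theorem norm_frobVec (X : Matrix (Fin m) (Fin n) ℂ) : ‖frobVec X‖ = frobNorm X := by
  rw [EuclideanSpace.norm_eq, frobNorm, ← Fintype.sum_prod_type']
  rfl

theorem frobNorm_nonneg (X : Matrix (Fin m) (Fin n) ℂ) : 0 ≤ frobNorm X :=
  Real.sqrt_nonneg _

theorem frobNorm_sq (X : Matrix (Fin m) (Fin n) ℂ) : frobNorm X ^ 2 = ∑ i, ∑ j, ‖X i j‖ ^ 2 :=
  Real.sq_sqrt (by positivity)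

theorem frobNorm_eq_zero {X : Matrix (Fin m) (Fin n) ℂ} : frobNorm X = 0 ↔ X = 0 := by
  rw [← norm_frobVec, norm_eq_zero, LinearEquiv.map_eq_zero_iff]

theorem frobNorm_smul (c : ℂ) (X : Matrix (Fin m) (Fin n) ℂ) :
    frobNorm (c • X) = ‖c‖ * frobNorm X := by
  rw [← norm_frobVec, map_smul, norm_smul, norm_frobVec]

theorem frobNorm_add_le (X Y : Matrix (Fin m) (Fin n) ℂ) :
    frobNorm (X + Y) ≤ frobNorm X + frobNorm Y := by
  simpa only [← norm_frobVec, map_add] using norm_add_le _ _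

theorem frobNorm_sq_eq_re_trace (X : Matrix (Fin m) (Fin n) ℂ) :
    frobNorm X ^ 2 = (Xᴴ * X).trace.re := by
  rw [frobNorm_sq, Finset.sum_comm, Matrix.trace, Complex.re_sum]
  refine Finset.sum_congr rfl fun j _ => ?_
  simp [Matrix.mul_apply, Complex.re_sum, ← Complex.normSq_eq_norm_sq, Complex.normSq_apply]

theorem frobNorm_mul_unitary (X : Matrix (Fin m) (Fin n) ℂ) {R : Matrix (Fin n) (Fin n) ℂ}
    (hR : Rᴴ * R = 1) : frobNorm (X * R) = frobNorm X := by
  have hsq : frobNorm (X * R) ^ 2 = frobNorm X ^ 2 := by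
    rw [frobNorm_sq_eq_re_trace, frobNorm_sq_eq_re_trace, Matrix.conjTranspose_mul,
      Matrix.mul_assoc, Matrix.trace_mul_comm, Matrix.mul_assoc, Matrix.mul_assoc,
      mul_eq_one_comm.mp hR, Matrix.mul_one]
  exact (pow_left_inj₀ (frobNorm_nonneg _) (frobNorm_nonneg _) two_ne_zero).mp hsq

theorem frobNorm_mul_le (B : Matrix (Fin m) (Fin m) ℂ) (X : Matrix (Fin m) (Fin n) ℂ) :
    frobNorm (B * X) ≤ specNorm B * frobNorm X := by
  have hcol (j : Fin n) :
      ∑ i, ‖(B * X) i j‖ ^ 2 ≤ specNorm B ^ 2 * ∑ i, ‖X i j‖ ^ 2 := by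
    have h := B.l2_opNorm_mulVec (WithLp.toLp 2 fun i => X i j)
    rw [← sq_le_sq₀ (norm_nonneg _) (by positivity), mul_pow, EuclideanSpace.norm_eq,
      EuclideanSpace.norm_eq, Real.sq_sqrt (by positivity), Real.sq_sqrt (by positivity)] at h
    simpa [specNorm_eq_norm, Matrix.mul_apply, Matrix.mulVec, dotProduct] using h
  refine le_of_sq_le_sq ?_ (mul_nonneg (norm_nonneg B) (frobNorm_nonneg X))
  rw [mul_pow, frobNorm_sq, frobNorm_sq, Finset.sum_comm,
    Finset.sum_comm (f := fun i j => ‖X i j‖ ^ 2), Finset.mul_sum]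
  exact Finset.sum_le_sum fun j _ => hcol j

end Norms

section Polarization

variable {𝕜 E F : Type*} [RCLike 𝕜] [NormedAddCommGroup E] [InnerProductSpace 𝕜 E]
  [NormedAddCommGroup F] [InnerProductSpace 𝕜 F]

open RCLike in
theorem two_mul_re_inner_le_of_near_isometry {x y : E} {u v : F} {κ δ : ℝ}
    (hadd : κ * ‖u + v‖ ^ 2 ≤ (1 + δ) * ‖x + y‖ ^ 2)
    (hsub : (1 - δ) * ‖x - y‖ ^ 2 ≤ κ * ‖u - v‖ ^ 2) :
    2 * κ * re ⟪u, v⟫_𝕜 ≤ 2 * re ⟪x, y⟫_𝕜 + δ * (‖x‖ ^ 2 + ‖y‖ ^ 2) := by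
  rw [norm_add_sq (𝕜 := 𝕜), norm_add_sq (𝕜 := 𝕜)] at hadd
  rw [norm_sub_sq (𝕜 := 𝕜), norm_sub_sq (𝕜 := 𝕜)] at hsub
  linear_combination (hadd + hsub) / 2

end Polarization

noncomputable def measurementMap {D K : ℕ} (A : Fin K → Matrix (Fin D) (Fin D) ℂ) :
    Matrix (Fin D) (Fin D) ℂ →ₗ[ℂ] EuclideanSpace ℂ (Fin K) where
  toFun ρ := WithLp.toLp 2 fun k => (A k * ρ).trace
  map_add' ρ σ := by ext k; simp [Matrix.mul_add]
  map_smul' c ρ := by ext k; simp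

section RIP

variable {D K s : ℕ} {A : Fin K → Matrix (Fin D) (Fin D) ℂ} {δ : ℝ}

theorem norm_measurementMap_sq (ρ : Matrix (Fin D) (Fin D) ℂ) :
    ‖measurementMap A ρ‖ ^ 2 = ∑ k, ‖(A k * ρ).trace‖ ^ 2 := by
  rw [EuclideanSpace.norm_eq, Real.sq_sqrt (by positivity)]
  rfl

theorem IsRIP.two_mul_re_inner_le (hRIP : IsRIP A s δ) {ρ σ : Matrix (Fin D) (Fin D) ℂ}
    (hrank : ρ.rank + σ.rank ≤ s) :
    2 * ((D : ℝ) / K) * (⟪measurementMap A ρ, measurementMap A σ⟫_ℂ).re ≤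
      2 * (⟪frobVec ρ, frobVec σ⟫_ℂ).re + δ * (frobNorm ρ ^ 2 + frobNorm σ ^ 2) := by
  have hadd := (hRIP (ρ + σ) ((Matrix.rank_add_le ρ σ).trans hrank)).2
  have hsub := (hRIP (ρ - σ) ((Matrix.rank_sub_le ρ σ).trans hrank)).1
  rw [← norm_measurementMap_sq, ← norm_frobVec, map_add, map_add] at hadd
  rw [← norm_measurementMap_sq, ← norm_frobVec, map_sub, map_sub] at hsub
  rw [← norm_frobVec, ← norm_frobVec]
  exact two_mul_re_inner_le_of_near_isometry (𝕜 := ℂ) hadd hsub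

theorem IsRIP.abs_re_inner_le (hRIP : IsRIP A s δ) {ρ σ : Matrix (Fin D) (Fin D) ℂ}
    (hrank : ρ.rank + σ.rank ≤ s) :
    |(D : ℝ) / K * (⟪measurementMap A ρ, measurementMap A σ⟫_ℂ).re| ≤
      (1 + δ) * frobNorm ρ * frobNorm σ := by
  rcases eq_or_ne ρ 0 with rfl | hρ
  · simp [frobNorm]
  rcases eq_or_ne σ 0 with rfl | hσ
  · simp [frobNorm]
  have ha : 0 < frobNorm ρ := (frobNorm_nonneg ρ).lt_of_ne' (frobNorm_eq_zero.not.mpr hρ)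
  have hb : 0 < frobNorm σ := (frobNorm_nonneg σ).lt_of_ne' (frobNorm_eq_zero.not.mpr hσ)
  have hCS : |(⟪frobVec ρ, frobVec σ⟫_ℂ).re| ≤ frobNorm ρ * frobNorm σ := by
    rw [← norm_frobVec, ← norm_frobVec]
    exact (Complex.abs_re_le_norm _).trans (norm_inner_le_norm _ _)
  -- rescale `ρ` and `σ` to the same Frobenius norm, with either sign
  have key (ε : ℝ) (hε : |ε| = 1) :
      ε * ((D : ℝ) / K * (⟪measurementMap A ρ, measurementMap A σ⟫_ℂ).re) ≤
        ε * (⟪frobVec ρ, frobVec σ⟫_ℂ).re + δ * frobNorm ρ * frobNorm σ := by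
    have h := hRIP.two_mul_re_inner_le
      (ρ := ((ε * frobNorm σ : ℝ) : ℂ) • ρ) (σ := ((frobNorm ρ : ℝ) : ℂ) • σ)
      ((add_le_add (Matrix.rank_smul_le _ _) (Matrix.rank_smul_le _ _)).trans hrank)
    simp only [map_smul, inner_smul_left, inner_smul_right, frobNorm_smul, Complex.norm_real,
      Real.norm_eq_abs, abs_mul, hε, abs_of_pos ha, abs_of_pos hb, Complex.conj_ofReal,
      ← mul_assoc, ← Complex.ofReal_mul, Complex.re_ofReal_mul, one_mul] at h
    refine le_of_mul_le_mul_left ?_ (by positivity : 0 < 2 * frobNorm ρ * frobNorm σ)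
    linear_combination h
  have hpos := key 1 (by simp)
  have hneg := key (-1) (by simp)
  rw [abs_le] at hCS ⊢
  constructor <;> nlinarith

end RIP

section Spectral

variable {D K s : ℕ}

theorem specNorm_le_of_abs_re_inner_le {M : Matrix (Fin D) (Fin D) ℂ} (hM : M.IsHermitian)
    {C : ℝ} (hC : 0 ≤ C)
    (h : ∀ x, |(⟪x, Matrix.toEuclideanLin M x⟫_ℂ).re| ≤ C * ‖x‖ ^ 2) : specNorm M ≤ C := by
  have hT : (LinearMap.toContinuousLinearMap (Matrix.toEuclideanLin M)).IsSymmetric :=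
    Matrix.isSymmetric_toEuclideanLin_iff.mpr hM
  rw [specNorm, ContinuousLinearMap.norm_eq_iSup_rayleighQuotient _ hT]
  refine ciSup_le fun x => ?_
  rcases eq_or_ne x 0 with rfl | hx
  · simpa using hC
  rw [ContinuousLinearMap.rayleighQuotient, ContinuousLinearMap.reApplyInnerSelf_apply,
    inner_re_symm, abs_div, abs_sq, div_le_iff₀ (by positivity)]
  exact h x

theorem inner_toEuclideanLin_self (M : Matrix (Fin D) (Fin D) ℂ) (x : EuclideanSpace ℂ (Fin D)) :
    ⟪x, Matrix.toEuclideanLin M x⟫_ℂ = (M * Matrix.vecMulVec x (star x)).trace := by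
  rw [Matrix.mul_vecMulVec, Matrix.trace_vecMulVec]
  rfl

theorem frobNorm_vecMulVec_star_self (x : EuclideanSpace ℂ (Fin D)) :
    frobNorm (Matrix.vecMulVec x (star x)) = ‖x‖ ^ 2 := by
  simp only [frobNorm, Matrix.vecMulVec_apply, norm_mul, mul_pow, Pi.star_apply, norm_star,
    ← Finset.mul_sum, ← Finset.sum_mul]
  rw [EuclideanSpace.norm_eq, Real.sq_sqrt (by positivity), Real.sqrt_mul_self (by positivity)]

theorem star_trace_mul_of_isHermitian {A Z : Matrix (Fin D) (Fin D) ℂ} (hA : A.IsHermitian)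
    (hZ : Z.IsHermitian) : star (A * Z).trace = (A * Z).trace := by
  rw [← Matrix.trace_conjTranspose, Matrix.conjTranspose_mul, hA.eq, hZ.eq, Matrix.trace_mul_comm]

/-- The normal operator `𝒜*𝒜` of the measurement map. -/
noncomputable def normalMap (A : Fin K → Matrix (Fin D) (Fin D) ℂ)
    (Z : Matrix (Fin D) (Fin D) ℂ) : Matrix (Fin D) (Fin D) ℂ :=
  ∑ k, (A k * Z).trace • A k

variable {A : Fin K → Matrix (Fin D) (Fin D) ℂ} {Z : Matrix (Fin D) (Fin D) ℂ}

theorem isHermitian_normalMap (hA : ∀ k, (A k).IsHermitian) (hZ : Z.IsHermitian) :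
    (normalMap A Z).IsHermitian := by
  simp only [Matrix.IsHermitian, normalMap, Matrix.conjTranspose_sum, Matrix.conjTranspose_smul,
    (hA _).eq, star_trace_mul_of_isHermitian (hA _) hZ]

theorem trace_normalMap_mul (hA : ∀ k, (A k).IsHermitian) (hZ : Z.IsHermitian)
    (X : Matrix (Fin D) (Fin D) ℂ) :
    (normalMap A Z * X).trace = ⟪measurementMap A Z, measurementMap A X⟫_ℂ := by
  simp only [normalMap, Finset.sum_mul, Matrix.trace_sum, Matrix.smul_mul, Matrix.trace_smul,
    smul_eq_mul, measurementMap, LinearMap.coe_mk, AddHom.coe_mk,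
    EuclideanSpace.inner_toLp_toLp, dotProduct, Pi.star_apply,
    star_trace_mul_of_isHermitian (hA _) hZ, mul_comm]

theorem IsRIP.specNorm_smul_normalMap_le {δ : ℝ} (hA : ∀ k, (A k).IsHermitian)
    (hRIP : IsRIP A s δ) (hδ : 0 ≤ δ) (hZ : Z.IsHermitian) (hrank : Z.rank + 1 ≤ s) :
    specNorm ((((D : ℝ) / K : ℝ) : ℂ) • normalMap A Z) ≤ (1 + δ) * frobNorm Z := by
  have hM : ((((D : ℝ) / K : ℝ) : ℂ) • normalMap A Z).IsHermitian :=
    Matrix.IsHermitian.smul (isHermitian_normalMap hA hZ) (Complex.conj_ofReal _)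
  refine specNorm_le_of_abs_re_inner_le hM (by have := frobNorm_nonneg Z; positivity) fun x => ?_
  rw [inner_toEuclideanLin_self, Matrix.smul_mul, Matrix.trace_smul, smul_eq_mul,
    Complex.re_ofReal_mul, trace_normalMap_mul hA hZ, ← frobNorm_vecMulVec_star_self]
  exact hRIP.abs_re_inner_le ((Nat.add_le_add_left (Matrix.rank_vecMulVec_le _ _) _).trans hrank)

end Spectral

theorem sigmaMin_le_frobNorm {D r : ℕ} (X : Matrix (Fin D) (Fin r) ℂ) :
    sigmaMin X ≤ frobNorm X := by
  rcases isEmpty_or_nonempty (Fin r) with hr | ⟨⟨i⟩⟩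
  · simp [sigmaMin, Real.iInf_of_isEmpty, frobNorm_nonneg]
  have hH := Matrix.isHermitian_conjTranspose_mul_self X
  have hsum : ∑ j, hH.eigenvalues j = frobNorm X ^ 2 := by
    rw [frobNorm_sq_eq_re_trace, hH.trace_eq_sum_eigenvalues]
    simp
  have hle : ⨅ j, hH.eigenvalues j ≤ frobNorm X ^ 2 :=
    calc ⨅ j, hH.eigenvalues j ≤ hH.eigenvalues i := ciInf_le (Finite.bddBelow_range _) i
      _ ≤ ∑ j, hH.eigenvalues j := Finset.single_le_sum
          (fun j _ => (Matrix.posSemidef_conjTranspose_mul_self X).eigenvalues_nonneg j)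
          (Finset.mem_univ i)
      _ = frobNorm X ^ 2 := hsum
  calc sigmaMin X ≤ Real.sqrt (frobNorm X ^ 2) := Real.sqrt_le_sqrt hle
    _ = frobNorm X := Real.sqrt_sq (frobNorm_nonneg X)

theorem wGrad_eq_normalMap_sub_adjointMap {D K r : ℕ} {A : Fin K → Matrix (Fin D) (Fin D) ℂ}
    {ρ : Matrix (Fin D) (Fin D) ℂ}
    {yhat e : Fin K → ℝ} (he : ∀ k, (e k : ℂ) = yhat k - (A k * ρ).trace)
    (U : Matrix (Fin D) (Fin r) ℂ) :
    wGrad A yhat U =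
      (((D : ℝ) / K : ℝ) : ℂ) • (normalMap A (U * Uᴴ - ρ) - adjointMap A e) * U := by
  rw [wGrad, normalMap, adjointMap, ← Finset.sum_sub_distrib, Matrix.smul_mul, Matrix.sum_mul]
  push_cast
  congr 1
  refine Finset.sum_congr rfl fun k _ => ?_
  rw [← sub_smul, Matrix.smul_mul, he, Matrix.mul_sub, Matrix.trace_sub]
  ring_nf

theorem frobNorm_le_add_frobNorm_sub_mul_unitary {D r : ℕ} (U V : Matrix (Fin D) (Fin r) ℂ)
    {R : Matrix (Fin r) (Fin r) ℂ} (hR : Rᴴ * R = 1) :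
    frobNorm U ≤ frobNorm V + frobNorm (U - V * R) := by
  have h := frobNorm_add_le (U - V * R) (V * R)
  rwa [sub_add_cancel, frobNorm_mul_unitary _ hR, add_comm] at h

theorem IsRIP.frobNorm_wGrad_le {D K r s : ℕ} {A : Fin K → Matrix (Fin D) (Fin D) ℂ} {δ : ℝ}
    (hA : ∀ k, (A k).IsHermitian) (hRIP : IsRIP A s δ) (hδ : 0 ≤ δ)
    {ρ : Matrix (Fin D) (Fin D) ℂ} {yhat e : Fin K → ℝ}
    (he : ∀ k, (e k : ℂ) = yhat k - (A k * ρ).trace) {U : Matrix (Fin D) (Fin r) ℂ}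
    (hZ : (U * Uᴴ - ρ).IsHermitian) (hrank : (U * Uᴴ - ρ).rank + 1 ≤ s) :
    frobNorm (wGrad A yhat U) ≤
      ((1 + δ) * frobNorm (U * Uᴴ - ρ) + D / K * specNorm (adjointMap A e)) * frobNorm U := by
  set κ : ℝ := D / K
  have hN : specNorm ((κ : ℂ) • adjointMap A e) = κ * specNorm (adjointMap A e) := by
    rw [specNorm_smul, Complex.norm_real, Real.norm_of_nonneg (by positivity)]
  calc frobNorm (wGrad A yhat U)
      ≤ specNorm ((κ : ℂ) • normalMap A (U * Uᴴ - ρ) - (κ : ℂ) • adjointMap A e) *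
          frobNorm U := by
        rw [wGrad_eq_normalMap_sub_adjointMap he, smul_sub]
        exact frobNorm_mul_le _ _
    _ ≤ (specNorm ((κ : ℂ) • normalMap A (U * Uᴴ - ρ)) + specNorm ((κ : ℂ) • adjointMap A e)) *
          frobNorm U :=
        mul_le_mul_of_nonneg_right (specNorm_sub_le _ _) (frobNorm_nonneg U)
    _ ≤ _ := by
        rw [hN]
        exact mul_le_mul_of_nonneg_right
          (add_le_add_left (hRIP.specNorm_smul_normalMap_le hA hδ hZ hrank) _) (frobNorm_nonneg U)

theorem stmt_11_general {D K r : ℕ} (hr : 0 < r)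
    (A : Fin K → Matrix (Fin D) (Fin D) ℂ) (hA : ∀ k, (A k).IsHermitian)
    (Ustar : Matrix (Fin D) (Fin r) ℂ) (hUstar : frobNorm Ustar = 1)
    (δ : ℝ) (hδ0 : 0 ≤ δ) (hRIP : IsRIP A (3 * r) δ)
    (yhat e : Fin K → ℝ)
    (he : ∀ k, (e k : ℂ) = (yhat k : ℂ) - Matrix.trace (A k * (Ustar * Ustarᴴ)))
    (U : Matrix (Fin D) (Fin r) ℂ) (R : Matrix (Fin r) (Fin r) ℂ)
    (hRunit : Rᴴ * R = 1)
    (hclose : frobNorm (U - Ustar * R) ≤ sigmaMin Ustar / 4) :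
    frobNorm (wGrad A yhat U) ^ 2 ≤
      25 / 8 * (1 + 2 * δ) ^ 2 * frobNorm (U * Uᴴ - Ustar * Ustarᴴ) ^ 2
        + 25 * (D : ℝ) ^ 2 / (8 * (K : ℝ) ^ 2) * specNorm (adjointMap A e) ^ 2 := by
  set Z := U * Uᴴ - Ustar * Ustarᴴ
  have hZ : Z.IsHermitian :=
    (isHermitian_mul_conjTranspose_self U).sub (isHermitian_mul_conjTranspose_self Ustar)
  have hrank : Z.rank + 1 ≤ 3 * r := by
    have hU := (U.rank_mul_le_left Uᴴ).trans U.rank_le_width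
    have hUstar := (Ustar.rank_mul_le_left Ustarᴴ).trans Ustar.rank_le_width
    have : Z.rank ≤ _ := rank_sub_le (U * Uᴴ) (Ustar * Ustarᴴ)
    omega
  have hU : frobNorm U ≤ 5 / 4 := by
    have := frobNorm_le_add_frobNorm_sub_mul_unitary U Ustar hRunit
    linarith [sigmaMin_le_frobNorm Ustar]
  have hZ0 := frobNorm_nonneg Z
  have hs0 : 0 ≤ specNorm (adjointMap A e) := norm_nonneg _
  have hκ : 0 ≤ (D : ℝ) / K := by positivity
  have hG : frobNorm (wGrad A yhat U) ≤
      ((1 + 2 * δ) * frobNorm Z + D / K * specNorm (adjointMap A e)) * (5 / 4) :=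
    (hRIP.frobNorm_wGrad_le hA hδ0 he hZ hrank).trans <|
      mul_le_mul (add_le_add_left (mul_le_mul_of_nonneg_right (by linarith) hZ0) _) hU
        (frobNorm_nonneg U) (add_nonneg (mul_nonneg (by linarith) hZ0) (mul_nonneg hκ hs0))
  calc frobNorm (wGrad A yhat U) ^ 2
      ≤ (((1 + 2 * δ) * frobNorm Z + D / K * specNorm (adjointMap A e)) * (5 / 4)) ^ 2 :=
        pow_le_pow_left₀ (frobNorm_nonneg _) hG 2
    _ ≤ 25 / 8 * ((1 + 2 * δ) * frobNorm Z) ^ 2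
          + 25 / 8 * (D / K * specNorm (adjointMap A e)) ^ 2 := by
        nlinarith [sq_nonneg ((1 + 2 * δ) * frobNorm Z - D / K * specNorm (adjointMap A e))]
    _ = _ := by ring

/-- Gradient norm bound. -/
theorem stmt_11 {D K r : ℕ} (hD : 0 < D) (hK : 0 < K) (hr : 0 < r) (hrD : r ≤ D)
    (A : Fin K → Matrix (Fin D) (Fin D) ℂ) (hA : ∀ k, (A k).IsHermitian)
    (Ustar : Matrix (Fin D) (Fin r) ℂ) (hUstar : frobNorm Ustar = 1)
    (δ : ℝ) (hδ0 : 0 ≤ δ) (hδ1 : δ < 1) (hRIP : IsRIP A (3 * r) δ)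
    (yhat e : Fin K → ℝ)
    (he : ∀ k, (e k : ℂ) = (yhat k : ℂ) - Matrix.trace (A k * (Ustar * Ustarᴴ)))
    (U : Matrix (Fin D) (Fin r) ℂ) (R : Matrix (Fin r) (Fin r) ℂ)
    (hRunit : Rᴴ * R = 1)
    (hRmin : ∀ R' : Matrix (Fin r) (Fin r) ℂ, R'ᴴ * R' = 1 →
      frobNorm (U - Ustar * R) ≤ frobNorm (U - Ustar * R'))
    (hclose : frobNorm (U - Ustar * R) ≤ sigmaMin Ustar / 4) :
    frobNorm (wGrad A yhat U) ^ 2 ≤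
      25 / 8 * (1 + 2 * δ) ^ 2 * frobNorm (U * Uᴴ - Ustar * Ustarᴴ) ^ 2
        + 25 * (D : ℝ) ^ 2 / (8 * (K : ℝ) ^ 2) * specNorm (adjointMap A e) ^ 2 :=
  stmt_11_general hr A hA Ustar hUstar δ hδ0 hRIP yhat e he U R hRunit hclose
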